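/- (Proposition 5.1 for type B) Fix n ≥ 1 and a vertex x = (p,r) of the valued translation quiver Q realizing ℤB_{n+1}. Then: (i) for every vertex y and every 1 ≤ k ≤ 2n, h'_k(y,x) ≥ 0 (hence h_k(y,x) = h'_k(y,x)); (ii) h_{2n}(y,x) = 1 if y = (p−n, r) and h_{2n}(y,x) = 0 otherwise; (iii) h_k(y,x) = 0 for every vertex y and every k > 2n. -/

import Mathlib

/-- Valued sum over the arrows `y → v` of the valued translation quiver realizing
`ℤB_{n+1}`: the vertex set is `ℤ × {0,…,n}`, with arrows `(q,s) → (q,s+1)` for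
`s < n` and `(q,s) → (q+1,s-1)` for `0 < s`; each arrow `(q,n-1) → (q,n)` carries
valuation `(2,1)` and each arrow `(q,n) → (q+1,n-1)` carries valuation `(1,2)`,
all other arrows carry valuation `(1,1)`. Here each summand `f v` is weighted
by the first component of the valuation of the arrow `y → v`. -/
def stepB (n : ℕ) (f : ℤ × ℕ → ℕ) (y : ℤ × ℕ) : ℤ :=
  (if y.2 < n then (if y.2 = n - 1 then 2 else 1) * (f (y.1, y.2 + 1) : ℤ) else 0) +
    (if 0 < y.2 then (f (y.1 + 1, y.2 - 1) : ℤ) else 0)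

/-- `hB n x k y` is `h_k(y,x)` for `ℤB_{n+1}`: `h_0(y,x) = δ(y,x)` and, for `k > 0`,
`h_k(y,x) = max(h'_k(y,x), 0)` where
`h'_k(y,x) = ∑_{α : y → v} d_α · h_{k-1}(v,x) - h_{k-2}(τ⁻¹ y, x)` and
`τ⁻¹(q,s) = (q+1,s)`. -/
def hB (n : ℕ) (x : ℤ × ℕ) : ℕ → ℤ × ℕ → ℕ
  | 0 => fun y => if y = x then 1 else 0
  | 1 => fun y => (stepB n (hB n x 0) y).toNat
  | k + 2 => fun y =>
      (stepB n (hB n x (k + 1)) y - (hB n x k (y.1 + 1, y.2) : ℤ)).toNat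

/-- `h'B n x k y` is `h'_k(y,x)` for `ℤB_{n+1}` (meaningful for `k ≥ 1`). -/
def h'B (n : ℕ) (x : ℤ × ℕ) (k : ℕ) (y : ℤ × ℕ) : ℤ :=
  stepB n (hB n x (k - 1)) y -
    (if 2 ≤ k then (hB n x (k - 2) (y.1 + 1, y.2) : ℤ) else 0)

/-- `hTotB n y x = h(y,x) = ∑_{k ≥ 0} h_k(y,x)` for `ℤB_{n+1}`. -/
noncomputable def hTotB (n : ℕ) (y x : ℤ × ℕ) : ℕ := ∑ᶠ k : ℕ, hB n x k y

/-! On `ℤA_{2n+1}` (levels `0,…,2n`), `h_k(−,x)` is the indicator of the `k`-th antidiagonal of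
the hammock rectangle spanned by `x`; it satisfies the mesh recursion exactly, except for a single
defect at `k = 2n + 2` where the rectangle closes up. The reflection `(q,s) ↦ (q+s-n, 2n-s)` fixes
level `n`, and summing over its orbits turns mesh sums of `ℤA_{2n+1}` into the valued mesh sums of
`ℤB_{n+1}`. So `h'_k` on `ℤB_{n+1}` is the folded indicator, minus one at the defect; the folded
indicators vanish from `k = 2n + 1` on, so the truncation `max(·, 0)` absorbs the defect, and at
`k = 2n` only the corner `(p-n, r)` survives. -/

def stepA (N : ℤ) (g : ℤ × ℤ → ℕ) (y : ℤ × ℤ) : ℕ :=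
  (if y.2 < N then g (y.1, y.2 + 1) else 0) + (if 0 < y.2 then g (y.1 + 1, y.2 - 1) else 0)

-- `h_k(−,x)` on `ℤA_{N+1}`: `y` reaches `x` by `x.1 - y.1` descending and `k - (x.1 - y.1)`
-- ascending arrows, and lies in the rectangle with corners `x` and `(x.1 - N + x.2, N - x.2)`.
def hammockA (N : ℤ) (x : ℤ × ℤ) (k : ℤ) (y : ℤ × ℤ) : ℕ :=
  if 0 ≤ x.1 - y.1 ∧ x.1 - y.1 ≤ k ∧ y.2 = x.2 + 2 * (x.1 - y.1) - k ∧
      x.1 - y.1 ≤ N - x.2 ∧ k - (x.1 - y.1) ≤ x.2 then 1 else 0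

theorem hammockA_mesh (N : ℤ) (x : ℤ × ℤ) (k : ℤ) (hk : 0 ≤ k) (y : ℤ × ℤ)
    (hy₀ : 0 ≤ y.2) (hyN : y.2 ≤ N) :
    stepA N (hammockA N x k) y +
        (if k = N + 1 ∧ y = (x.1 - N + x.2 - 1, N - x.2) then 1 else 0) =
      hammockA N x (k + 1) y + hammockA N x (k - 1) (y.1 + 1, y.2) := by
  obtain ⟨p, r⟩ := x
  obtain ⟨q, s⟩ := y
  simp only [stepA, hammockA, Prod.mk.injEq] at *
  split_ifs <;> omega

def foldB (n : ℕ) (g : ℤ × ℤ → ℕ) (y : ℤ × ℕ) : ℕ :=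
  g (y.1, y.2) + if y.2 < n then g (y.1 + y.2 - n, 2 * n - y.2) else 0

theorem stepB_foldB (n : ℕ) (g : ℤ × ℤ → ℕ) (q : ℤ) (s : ℕ) (hs : s ≤ n) :
    stepB n (foldB n g) (q, s) = foldB n (stepA (2 * n) g) (q, s) := by
  obtain ⟨m, rfl⟩ : ∃ m, n = s + m := ⟨n - s, by omega⟩
  rcases s with _ | t <;> rcases m with _ | _ | m <;>
    simp [stepB, foldB, stepA] <;> ring_nf <;> omega

def hammockB (n : ℕ) (x : ℤ × ℕ) (k : ℤ) : ℤ × ℕ → ℕ :=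
  foldB n (hammockA (2 * n) (x.1, x.2) k)

theorem hammockB_mesh (n : ℕ) (x : ℤ × ℕ) (hx : x.2 ≤ n) (k : ℤ) (hk : 0 ≤ k) (q : ℤ)
    (s : ℕ) (hs : s ≤ n) :
    stepB n (hammockB n x k) (q, s) +
        (if k = 2 * n + 1 ∧ (q, s) = (x.1 - n - 1, x.2) then 1 else 0) =
      hammockB n x (k + 1) (q, s) + hammockB n x (k - 1) (q + 1, s) := by
  have hA := hammockA_mesh (2 * n) (x.1, x.2) k hk
  have h₁ := hA (q, s) (by positivity) (by push_cast; omega)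
  have h₂ := hA (q + s - n, 2 * n - s) (by omega) (by omega)
  rw [hammockB, stepB_foldB n _ q s hs]
  simp only [hammockB, foldB, Prod.mk.injEq] at h₁ h₂ ⊢
  push_cast
  rw [show q + 1 + (s : ℤ) - n = q + s - n + 1 by ring]
  split_ifs at h₁ h₂ ⊢ <;> omega

theorem hammockB_eq_zero_of_neg (n : ℕ) (x : ℤ × ℕ) {k : ℤ} (hk : k < 0) (y : ℤ × ℕ) :
    hammockB n x k y = 0 := by
  simp only [hammockB, foldB, hammockA]
  split_ifs <;> omega

theorem hammockB_eq_zero_of_two_mul_lt (n : ℕ) (x : ℤ × ℕ) {k : ℤ} (hk : 2 * n < k)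
    (y : ℤ × ℕ) : hammockB n x k y = 0 := by
  simp only [hammockB, foldB, hammockA]
  split_ifs <;> omega

theorem hammockB_zero (n : ℕ) (x : ℤ × ℕ) (hx : x.2 ≤ n) (y : ℤ × ℕ) :
    hammockB n x 0 y = if y = x then 1 else 0 := by
  obtain ⟨p, r⟩ := x
  obtain ⟨q, s⟩ := y
  simp only [hammockB, foldB, hammockA, Prod.mk.injEq] at *
  split_ifs <;> omega

theorem hammockB_two_mul (n : ℕ) (x : ℤ × ℕ) (hx : x.2 ≤ n) (q : ℤ) (s : ℕ) (hs : s ≤ n) :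
    hammockB n x (2 * n) (q, s) = if (q, s) = (x.1 - n, x.2) then 1 else 0 := by
  obtain ⟨p, r⟩ := x
  simp only [hammockB, foldB, hammockA, Prod.mk.injEq] at *
  split_ifs <;> omega

theorem stepB_congr (n : ℕ) {f g : ℤ × ℕ → ℕ} (hfg : ∀ q s, s ≤ n → f (q, s) = g (q, s))
    {q : ℤ} {s : ℕ} (hs : s ≤ n) : stepB n f (q, s) = stepB n g (q, s) := by
  simp only [stepB]
  congr 1 <;> split_ifs <;> first | rfl | rw [hfg _ _ (by omega)]

theorem hB_eq_toNat_h'B (n : ℕ) (x : ℤ × ℕ) {k : ℕ} (hk : 1 ≤ k) (y : ℤ × ℕ) :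
    hB n x k y = (h'B n x k y).toNat := by
  obtain ⟨j, rfl⟩ := Nat.exists_eq_add_of_le' hk
  rcases j with _ | j <;> simp [hB, h'B]

theorem h'B_eq_of_forall_lt (n : ℕ) (x : ℤ × ℕ) (hx : x.2 ≤ n) {k : ℕ} (hk : 1 ≤ k)
    (hagree : ∀ m < k, ∀ q s, s ≤ n → hB n x m (q, s) = hammockB n x m (q, s))
    (q : ℤ) (s : ℕ) (hs : s ≤ n) :
    h'B n x k (q, s) = hammockB n x k (q, s) -
      (if k = 2 * n + 2 ∧ (q, s) = (x.1 - n - 1, x.2) then 1 else 0) := by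
  obtain ⟨j, rfl⟩ := Nat.exists_eq_add_of_le' hk
  have hstep : stepB n (hB n x j) (q, s) = stepB n (hammockB n x j) (q, s) :=
    stepB_congr n (hagree j (by omega)) hs
  have hprev : (if 2 ≤ j + 1 then (hB n x (j + 1 - 2) (q + 1, s) : ℤ) else 0) =
      hammockB n x (j - 1) (q + 1, s) := by
    rcases j with _ | i
    · simp [hammockB_eq_zero_of_neg]
    · simp [hagree i (by omega) (q + 1) s hs]
  have hmesh := hammockB_mesh n x hx j (by positivity) q s hs
  rw [h'B, Nat.add_sub_cancel, hstep, hprev]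
  simp only [Prod.mk.injEq] at hmesh ⊢
  push_cast
  split_ifs at hmesh ⊢ <;> omega

theorem hB_eq_hammockB (n : ℕ) (x : ℤ × ℕ) (hx : x.2 ≤ n) (k : ℕ) (q : ℤ)
    (s : ℕ) (hs : s ≤ n) : hB n x k (q, s) = hammockB n x k (q, s) := by
  induction k using Nat.strong_induction_on generalizing q s with
  | _ k ih =>
    rcases Nat.eq_zero_or_pos k with rfl | hk
    · simp [hB, hammockB_zero n x hx]
    rw [hB_eq_toNat_h'B n x hk, h'B_eq_of_forall_lt n x hx hk ih q s hs]
    split_ifs with hdefect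
    · rw [hammockB_eq_zero_of_two_mul_lt n x (by omega)]
      rfl
    · simp

theorem h_vanishing_ZB_general (n : ℕ) (p : ℤ) (r : ℕ) (hr : r ≤ n) :
    (∀ (q : ℤ) (s : ℕ), s ≤ n → ∀ k : ℕ, 1 ≤ k → k ≤ 2 * n →
      0 ≤ h'B n (p, r) k (q, s) ∧
        (hB n (p, r) k (q, s) : ℤ) = h'B n (p, r) k (q, s)) ∧
      (∀ (q : ℤ) (s : ℕ), s ≤ n →
        hB n (p, r) (2 * n) (q, s) =
          if (q, s) = (p - (n : ℤ), r) then 1 else 0) ∧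
      ∀ (q : ℤ) (s : ℕ), s ≤ n → ∀ k : ℕ, 2 * n < k → hB n (p, r) k (q, s) = 0 := by
  have hB_eq := hB_eq_hammockB n (p, r) hr
  refine ⟨fun q s hs k hk₁ hk₂ => ?_, fun q s hs => ?_, fun q s hs k hk => ?_⟩
  · have h' : h'B n (p, r) k (q, s) = hammockB n (p, r) k (q, s) := by
      rw [h'B_eq_of_forall_lt n (p, r) hr hk₁ (fun m _ => hB_eq m) q s hs,
        if_neg (by omega), sub_zero]
    rw [h', hB_eq k q s hs]
    exact ⟨by positivity, rfl⟩
  · rw [hB_eq _ q s hs, Nat.cast_mul, Nat.cast_two, hammockB_two_mul n (p, r) hr q s hs]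
  · rw [hB_eq k q s hs, hammockB_eq_zero_of_two_mul_lt n (p, r) (by exact_mod_cast hk)]

/-- Proposition 5.1 for type `B`: for a vertex `x = (p,r)` of `ℤB_{n+1}`,
(i) `h'_k(y,x) ≥ 0` for all vertices `y` and `1 ≤ k ≤ 2n` (hence `h_k = h'_k` there);
(ii) `h_{2n}(y,x) = 1` if `y = (p-n, r)` and `h_{2n}(y,x) = 0` otherwise;
(iii) `h_k(y,x) = 0` for all vertices `y` and all `k > 2n`. -/
theorem h_vanishing_ZB (n : ℕ) (hn : 1 ≤ n) (p : ℤ) (r : ℕ) (hr : r ≤ n) :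
    (∀ (q : ℤ) (s : ℕ), s ≤ n → ∀ k : ℕ, 1 ≤ k → k ≤ 2 * n →
      0 ≤ h'B n (p, r) k (q, s) ∧
        (hB n (p, r) k (q, s) : ℤ) = h'B n (p, r) k (q, s)) ∧
      (∀ (q : ℤ) (s : ℕ), s ≤ n →
        hB n (p, r) (2 * n) (q, s) =
          if (q, s) = (p - (n : ℤ), r) then 1 else 0) ∧
      ∀ (q : ℤ) (s : ℕ), s ≤ n → ∀ k : ℕ, 2 * n < k → hB n (p, r) k (q, s) = 0 :=
  h_vanishing_ZB_general n p r hr
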